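/- arXiv:1305.4780 — 3 statements merged into one kernel-verified Lean document; each statement's English description precedes it below -/
import Mathlib

section
/- Let f be a barcode with n = Multiset.card f bars. For every integer p with 1 ≤ p ≤ n, the drift of the p-th exterior power satisfies Δ(f^∧p) = C(n−1, p−1) · Δ(f), where C(n−1, p−1) is the binomial coefficient (n−1 choose p−1). -/
noncomputable section

/-- A barcode: a finite multiset of bars `(α, ℓ)` with positive lifespan `ℓ`. -/
def IsBarcode (f : Multiset (ℝ × ℝ)) : Prop := ∀ b ∈ f, (0 : ℝ) < b.2

/-- The `p`-th exterior power of a barcode: each `p`-element sub-multiset `s`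
contributes the bar whose birth grade is the sum of the birth grades in `s`
and whose lifespan is the minimum of the lifespans in `s`. -/
noncomputable def extPow (f : Multiset (ℝ × ℝ)) (p : ℕ) : Multiset (ℝ × ℝ) :=
  (Multiset.powersetCard p f).map
    (fun s => ((s.map Prod.fst).sum, sInf {x : ℝ | x ∈ s.map Prod.snd}))

/-- The birth series `B(f) = Σ_{(α,ℓ)∈f} x^α`. -/
noncomputable def birthSeries (f : Multiset (ℝ × ℝ)) : ℝ →₀ ℤ :=
  (f.map (fun b => Finsupp.single b.1 (1 : ℤ))).sum

/-- The death series `D(f) = Σ_{(α,ℓ)∈f} x^{α+ℓ}`. -/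
noncomputable def deathSeries (f : Multiset (ℝ × ℝ)) : ℝ →₀ ℤ :=
  (f.map (fun b => Finsupp.single (b.1 + b.2) (1 : ℤ))).sum

/-- The critical series `C(f) = B(f) − D(f)`. -/
noncomputable def critSeries (f : Multiset (ℝ × ℝ)) : ℝ →₀ ℤ :=
  birthSeries f - deathSeries f

/-- The lifespan series `L(f) = Σ_{(α,ℓ)∈f} x^ℓ`. -/
noncomputable def lifespanSeries (f : Multiset (ℝ × ℝ)) : ℝ →₀ ℤ :=
  (f.map (fun b => Finsupp.single b.2 (1 : ℤ))).sum

/-- The drift `Δ(f) = Σ_{(α,ℓ)∈f} α`. -/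
noncomputable def drift (f : Multiset (ℝ × ℝ)) : ℝ :=
  (f.map Prod.fst).sum

/-- The moment `μ(P) = Σ_β P(β)·β`. -/
noncomputable def moment (P : ℝ →₀ ℤ) : ℝ :=
  P.sum fun β n => (n : ℝ) * β

/-- The second moment `μ₂(P) = Σ_β P(β)·β²`. -/
noncomputable def moment2 (P : ℝ →₀ ℤ) : ℝ :=
  P.sum fun β n => (n : ℝ) * β ^ 2

end


/- The lifespans play no role: `Δ(f^∧p)` is the sum, over all `p`-element sub-multisets of the
birth grades of `f`, of their sums. Every birth grade lies in `(n - 1).choose (p - 1)` of these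
sub-multisets; in the proof this count arises from Pascal's rule, by induction on the multiset. -/

namespace Multiset

theorem sum_map_sum_powersetCard_succ {M : Type*} [AddCommMonoid M] (k : ℕ) (s : Multiset M) :
    ((s.powersetCard (k + 1)).map sum).sum = (card s - 1).choose k • s.sum := by
  induction s using Multiset.induction generalizing k with
  | empty => simp [powersetCard_zero_right]
  | cons a t ih =>
    have h_cons : ((t.powersetCard k).map fun u => (a ::ₘ u).sum).sum
        = (card t).choose k • a + ((t.powersetCard k).map sum).sum := by
      simp [sum_map_add, card_powersetCard]
    rw [powersetCard_cons, map_add, sum_add, map_map, Function.comp_def, h_cons, ih]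
    cases k with
    | zero => simp [add_comm]
    | succ q =>
      rw [ih q]
      cases ht : card t with
      | zero => simp [card_eq_zero.mp ht]
      | succ c =>
        simp only [card_cons, ht, Nat.succ_sub_one, sum_cons,
          Nat.choose_succ_succ' c q, add_nsmul, nsmul_add]
        abel

end Multiset

theorem map_fst_extPow (f : Multiset (ℝ × ℝ)) (p : ℕ) :
    (extPow f p).map Prod.fst = ((f.map Prod.fst).powersetCard p).map Multiset.sum := by
  simp only [extPow, Multiset.powersetCard_map, Multiset.map_map, Function.comp_def]

theorem drift_extPow_general (f : Multiset (ℝ × ℝ))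
    (n : ℕ) (hn : n = Multiset.card f)
    (p : ℕ) (hp1 : 1 ≤ p) :
    drift (extPow f p) = ((n - 1).choose (p - 1) : ℝ) * drift f := by
  obtain ⟨k, rfl⟩ : ∃ k, p = k + 1 := Nat.exists_eq_add_of_le' hp1
  rw [drift, map_fst_extPow, Multiset.sum_map_sum_powersetCard_succ, Multiset.card_map,
    nsmul_eq_mul, hn, drift, Nat.add_sub_cancel]

/-- `Δ(f^∧p) = (n−1 choose p−1) · Δ(f)`. -/
theorem drift_extPow (f : Multiset (ℝ × ℝ)) (hf : IsBarcode f)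
    (n : ℕ) (hn : n = Multiset.card f)
    (p : ℕ) (hp1 : 1 ≤ p) (hpn : p ≤ n) :
    drift (extPow f p) = ((n - 1).choose (p - 1) : ℝ) * drift f :=
  drift_extPow_general f n hn p hp1
end

section
/- Let f be a nonempty barcode with n = Multiset.card f, drift Δ(f), and minimal lifespan ℓ₁ (the minimum of the multiset of lifespans of f). Then the top exterior power f^∧n consists of the single bar (Δ(f), ℓ₁), and its critical series is C(f^∧n) = x^{Δ(f)} − x^{Δ(f)+ℓ₁}, i.e. C(f^∧n) = Finsupp.single (Δ(f)) 1 − Finsupp.single (Δ(f)+ℓ₁) 1. -/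
lemma powersetCard_self' {α : Type*} (s : Multiset α) :
    Multiset.powersetCard (Multiset.card s) s = {s} := by
  have hc : Multiset.card (Multiset.powersetCard (Multiset.card s) s) = 1 := by
    rw [Multiset.card_powersetCard, Nat.choose_self]
  obtain ⟨a, ha⟩ := Multiset.card_eq_one.mp hc
  have : a ∈ Multiset.powersetCard (Multiset.card s) s := by rw [ha]; simp
  rw [Multiset.mem_powersetCard] at this
  rw [ha, Multiset.eq_of_le_of_card_le this.1 this.2.ge]

/-- the top exterior power is the single bar `(Δ(f), ℓ₁)` and
`C(f^∧n) = x^{Δ(f)} − x^{Δ(f)+ℓ₁}`. -/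
theorem extPow_top (f : Multiset (ℝ × ℝ)) (hf : IsBarcode f) (hne : f ≠ 0)
    (n : ℕ) (hn : n = Multiset.card f)
    (ℓ₁ : ℝ) (hℓ₁ : ℓ₁ = sInf {x : ℝ | x ∈ f.map Prod.snd}) :
    extPow f n = {(drift f, ℓ₁)} ∧
      critSeries (extPow f n) =
        Finsupp.single (drift f) 1 - Finsupp.single (drift f + ℓ₁) 1 := by
  have h1 : extPow f n = {(drift f, ℓ₁)} := by
    rw [extPow, hn, powersetCard_self', Multiset.map_singleton, hℓ₁, drift]
  refine ⟨h1, ?_⟩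
  rw [h1]
  simp [critSeries, birthSeries, deathSeries]
end

section
/- Let f be a barcode with n = Multiset.card f bars and let ℓ₁ ≤ ℓ₂ ≤ … ≤ ℓₙ be the lifespans of its bars listed in nondecreasing order (a monotone enumeration of the multiset of second components of f). Then for every integer p with 1 ≤ p ≤ n, the moment of the critical series of the p-th exterior power is μ(C(f^∧p)) = − Σ_{i=1}^{n−p+1} C(n−i, p−1) · ℓᵢ, where C(n−i, p−1) denotes the binomial coefficient. -/
/-! Only the lifespans matter: births cancel in `B − D`, so `μ(C(g)) = −Σ ℓ` for any barcode `g`,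
and the lifespans of `f^∧p` are the minima of the `p`-element sub-multisets of lifespans of `f`.
Ordering `ℓ₀ ≤ … ≤ ℓ_{n-1}`, the bar `ℓᵢ` is the minimum of exactly `C(n-1-i, p-1)` of these
sub-multisets, which follows by induction on `n` by splitting off the largest lifespan. -/

noncomputable def momentHom : (ℝ →₀ ℤ) →+ ℝ :=
  Finsupp.liftAddHom fun β => (AddMonoidHom.mulRight β).comp (Int.castAddHom ℝ)

theorem momentHom_apply (P : ℝ →₀ ℤ) : momentHom P = moment P := rfl

theorem moment_sum_map_single {α : Type*} (g : Multiset α) (h : α → ℝ) :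
    moment (g.map fun b => Finsupp.single (h b) (1 : ℤ)).sum = (g.map h).sum := by
  rw [← momentHom_apply, AddMonoidHom.map_multiset_sum, Multiset.map_map]
  congr 1
  exact Multiset.map_congr rfl fun b _ => by simp [momentHom]

theorem moment_critSeries (g : Multiset (ℝ × ℝ)) :
    moment (critSeries g) = -(g.map Prod.snd).sum := by
  rw [← momentHom_apply, critSeries, map_sub, momentHom_apply, momentHom_apply, birthSeries,
    deathSeries, moment_sum_map_single, moment_sum_map_single, Multiset.sum_map_add]
  ring

theorem extPow_map_snd (f : Multiset (ℝ × ℝ)) (p : ℕ) :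
    (extPow f p).map Prod.snd =
      (Multiset.powersetCard p (f.map Prod.snd)).map fun m => sInf {x : ℝ | x ∈ m} := by
  rw [extPow, Multiset.powersetCard_map, Multiset.map_map, Multiset.map_map]
  rfl

theorem sInf_setOf_mem_cons_of_forall_le {m : Multiset ℝ} {a : ℝ} (hm : m ≠ 0)
    (ha : ∀ x ∈ m, x ≤ a) : sInf {x : ℝ | x ∈ a ::ₘ m} = sInf {x : ℝ | x ∈ m} := by
  obtain ⟨y, hy⟩ := Multiset.exists_mem_of_ne_zero hm
  have hbdd : BddBelow {x : ℝ | x ∈ m} := m.finite_toSet.bddBelow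
  have hset : {x : ℝ | x ∈ a ::ₘ m} = insert a {x : ℝ | x ∈ m} := by
    ext x
    simp
  rw [hset, csInf_insert hbdd ⟨y, hy⟩, inf_eq_right]
  exact (csInf_le hbdd hy).trans (ha y hy)

theorem sum_sInf_powersetCard_succ_range (ℓ : ℕ → ℝ) (p n : ℕ)
    (hℓ : MonotoneOn ℓ (Set.Iio n)) :
    ((Multiset.powersetCard (p + 1) ((Multiset.range n).map ℓ)).map
        fun m => sInf {x : ℝ | x ∈ m}).sum =
      ∑ i ∈ Finset.range n, ((n - (i + 1)).choose p : ℝ) * ℓ i := by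
  induction n generalizing p with
  | zero => simp [Multiset.powersetCard_zero_right]
  | succ n ih =>
    have hℓn : MonotoneOn ℓ (Set.Iio n) := hℓ.mono fun i hi => Nat.lt_succ_of_lt hi
    have hmax : ∀ x ∈ (Multiset.range n).map ℓ, x ≤ ℓ n := by
      simp only [Multiset.mem_map, Multiset.mem_range]
      rintro _ ⟨i, hi, rfl⟩
      exact hℓ (Nat.lt_succ_of_lt hi) (Nat.lt_succ_self n) hi.le
    rw [Multiset.range_succ, Multiset.map_cons, Multiset.powersetCard_cons, Multiset.map_add,
      Multiset.sum_add, ih p hℓn, Finset.sum_range_succ, Nat.sub_self]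
    rcases p with _ | q
    · simp
    · have hcons : ∀ m ∈ Multiset.powersetCard (q + 1) ((Multiset.range n).map ℓ),
          sInf {x : ℝ | x ∈ ℓ n ::ₘ m} = sInf {x : ℝ | x ∈ m} := by
        intro m hm
        obtain ⟨hle, hcard⟩ := Multiset.mem_powersetCard.mp hm
        exact sInf_setOf_mem_cons_of_forall_le (Multiset.card_pos.mp (by omega))
          fun x hx => hmax x (Multiset.mem_of_le hle hx)
      rw [Multiset.map_map,
        Multiset.map_congr (f := (fun m => sInf {x : ℝ | x ∈ m}) ∘ Multiset.cons (ℓ n)) rfl hcons,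
        ih q hℓn, Nat.choose_zero_succ, Nat.cast_zero, zero_mul, add_zero,
        ← Finset.sum_add_distrib]
      refine Finset.sum_congr rfl fun i hi => ?_
      have hsub : n - i = n - (i + 1) + 1 := by
        have := Finset.mem_range.mp hi
        omega
      rw [Nat.add_sub_add_right, hsub, Nat.choose_succ_succ']
      push_cast
      ring

theorem sum_range_choose_mul_eq_sum_range_sub (g : ℕ → ℝ) (n p : ℕ) :
    ∑ i ∈ Finset.range n, ((n - (i + 1)).choose p : ℝ) * g i =
      ∑ i ∈ Finset.range (n - p), ((n - (i + 1)).choose p : ℝ) * g i := by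
  refine (Finset.sum_subset (Finset.range_subset_range.mpr (Nat.sub_le n p)) ?_).symm
  intro i hin hi
  rw [Finset.mem_range] at hin
  rw [Finset.mem_range, not_lt] at hi
  rw [Nat.choose_eq_zero_of_lt (by omega), Nat.cast_zero, zero_mul]

theorem moment_critSeries_extPow_general
    (f : Multiset (ℝ × ℝ))
    (n : ℕ)
    (ℓ : ℕ → ℝ) (hmono : ∀ i j : ℕ, i ≤ j → j < n → ℓ i ≤ ℓ j)
    (hℓ : f.map Prod.snd = (Multiset.range n).map ℓ)
    (p : ℕ) (hp1 : 1 ≤ p) (hpn : p ≤ n) :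
    moment (critSeries (extPow f p)) =
      -∑ i ∈ Finset.range (n - p + 1), ((n - (i + 1)).choose (p - 1) : ℝ) * ℓ i := by
  obtain ⟨q, rfl⟩ := Nat.exists_eq_add_of_le' hp1
  have hmono' : MonotoneOn ℓ (Set.Iio n) := fun i _ j hj hij => hmono i j hij hj
  rw [moment_critSeries, extPow_map_snd, hℓ, sum_sInf_powersetCard_succ_range ℓ q n hmono',
    sum_range_choose_mul_eq_sum_range_sub, Nat.add_sub_cancel]
  congr 3
  omega

/-- `μ(C(f^∧p)) = − Σ_{i=1}^{n−p+1} (n−i choose p−1) ℓᵢ`, where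
`ℓ (i-1)` is the `i`-th smallest lifespan (0-indexed enumeration `ℓ 0 ≤ … ≤ ℓ (n-1)`). -/
theorem moment_critSeries_extPow
    (f : Multiset (ℝ × ℝ)) (hf : IsBarcode f)
    (n : ℕ) (hn : n = Multiset.card f)
    (ℓ : ℕ → ℝ) (hmono : ∀ i j : ℕ, i ≤ j → j < n → ℓ i ≤ ℓ j)
    (hℓ : f.map Prod.snd = (Multiset.range n).map ℓ)
    (p : ℕ) (hp1 : 1 ≤ p) (hpn : p ≤ n) :
    moment (critSeries (extPow f p)) =
      -∑ i ∈ Finset.range (n - p + 1), ((n - (i + 1)).choose (p - 1) : ℝ) * ℓ i :=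
  moment_critSeries_extPow_general f n ℓ hmono hℓ p hp1 hpn
end
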